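/- arXiv:math/0606390 — 2 statements merged into one kernel-verified Lean document; each statement's English description precedes it below -/
import Mathlib

section
/- Define f : ℝ² → ℝ by f(x₁, x₂) = x₁·sin(x₂/x₁) for x₁ ≠ 0 and f(0, x₂) = 0, and define its fiberwise holomorphic extension F : ℝ × ℂ → ℂ by F(x₁, z₂) = x₁·sin(z₂/x₁) for x₁ ≠ 0 and F(0, z₂) = 0. Then: (i) f is continuous on ℝ²; (ii) for every x₁ ∈ ℝ the map z₂ ↦ F(x₁, z₂) is entire and agrees with f(x₁, ·) on ℝ; (iii) F is not tempered near any point (0, x₂): for every x₂ ∈ ℝ, every C > 0 and every k ∈ ℕ there exists a positive integer ν such that |F(1/ν², x₂ + i/ν)| > C·ν^k (indeed |F(1/ν², x₂ + i/ν)| ≥ ν^{-2}·sinh(ν) → ∞ faster than any power of ν). -/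
open Complex Set

/-- The function `f(x₁,x₂) = x₁ sin(x₂/x₁)` (and `0` for `x₁ = 0`). -/
noncomputable def exF : ℝ × ℝ → ℝ :=
  fun p => if p.1 = 0 then 0 else p.1 * Real.sin (p.2 / p.1)

/-- Its fiberwise holomorphic extension `F(x₁,z₂) = x₁ sin(z₂/x₁)`. -/
noncomputable def exFext : ℝ → ℂ → ℂ :=
  fun x₁ z₂ => if x₁ = 0 then 0 else (x₁ : ℂ) * Complex.sin (z₂ / (x₁ : ℂ))

/-! Continuity of `f` follows from `|f(x₁, x₂)| ≤ |x₁|`. On the fiber `x₁ = ν⁻²` the point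
`z₂ = x₂ + i/ν` is sent by `z₂ ↦ z₂/x₁` to a point of imaginary part `ν`, and
`|sin w| ≥ sinh (Im w)`, so `|F(ν⁻², x₂ + i/ν)| ≥ ν⁻² sinh ν`, which outgrows every power of `ν`. -/

open Filter

lemma Real.tendsto_sinh_div_pow_atTop (n : ℕ) :
    Tendsto (fun x => Real.sinh x / x ^ n) atTop atTop := by
  refine tendsto_atTop_mono' atTop ?_ ((Real.tendsto_exp_div_pow_atTop n).atTop_div_const
    (by norm_num : (0 : ℝ) < 4))
  filter_upwards [Real.tendsto_exp_atTop.eventually_ge_atTop 2, eventually_gt_atTop 0]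
    with x hexp hx
  have hsinh : Real.exp x / 4 ≤ Real.sinh x := by
    have : Real.exp (-x) ≤ 1 := Real.exp_le_one_iff.2 (by linarith)
    rw [Real.sinh_eq]
    linarith
  rw [div_right_comm]
  gcongr

lemma exists_mul_pow_lt_inv_sq_mul_sinh (C : ℝ) (k : ℕ) :
    ∃ ν : ℕ, 0 < ν ∧ C * (ν : ℝ) ^ k < ((ν : ℝ) ^ 2)⁻¹ * Real.sinh ν := by
  obtain ⟨ν, hC, hν⟩ := ((((Real.tendsto_sinh_div_pow_atTop (k + 2)).comp
    tendsto_natCast_atTop_atTop).eventually_gt_atTop C).and (eventually_gt_atTop 0)).exists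
  refine ⟨ν, hν, ?_⟩
  rw [Function.comp_apply, lt_div_iff₀ (by positivity)] at hC
  calc C * (ν : ℝ) ^ k = ((ν : ℝ) ^ 2)⁻¹ * (C * (ν : ℝ) ^ (k + 2)) := by field_simp; ring
    _ < ((ν : ℝ) ^ 2)⁻¹ * Real.sinh ν := by gcongr

lemma Complex.sinh_im_le_norm_sin (z : ℂ) : Real.sinh z.im ≤ ‖Complex.sin z‖ := by
  have hsin : Complex.sin z = (Complex.exp (-z * I) - Complex.exp (z * I)) * I / 2 := rfl
  have hneg : ‖Complex.exp (-z * I)‖ = Real.exp z.im := by simp [Complex.norm_exp]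
  have hpos : ‖Complex.exp (z * I)‖ = Real.exp (-z.im) := by simp [Complex.norm_exp]
  have htri := norm_sub_norm_le (Complex.exp (-z * I)) (Complex.exp (z * I))
  rw [hneg, hpos] at htri
  rw [hsin, norm_div, norm_mul, Complex.norm_I, mul_one, Complex.norm_two, Real.sinh_eq]
  linarith

lemma abs_exF_le (p : ℝ × ℝ) : |exF p| ≤ |p.1| := by
  unfold exF
  split_ifs
  · simp
  · rw [abs_mul]
    exact mul_le_of_le_one_right (abs_nonneg _) (Real.abs_sin_le_one _)

lemma continuousAt_exF_of_fst_eq_zero {p : ℝ × ℝ} (hp : p.1 = 0) : ContinuousAt exF p := by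
  have hfst : Tendsto (fun q : ℝ × ℝ => |q.1|) (nhds p) (nhds 0) := by
    simpa [hp] using (continuous_fst.abs : Continuous fun q : ℝ × ℝ => |q.1|).tendsto p
  simpa [ContinuousAt, exF, hp] using squeeze_zero_norm abs_exF_le hfst

lemma continuousAt_exF_of_fst_ne_zero {p : ℝ × ℝ} (hp : p.1 ≠ 0) : ContinuousAt exF p := by
  have hev : (fun q : ℝ × ℝ => q.1 * Real.sin (q.2 / q.1)) =ᶠ[nhds p] exF := by
    filter_upwards [(isOpen_ne.preimage continuous_fst).mem_nhds hp] with q hq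
    simp [exF, show q.1 ≠ 0 from hq]
  exact ContinuousAt.congr (by fun_prop (disch := exact hp)) hev

lemma continuous_exF : Continuous exF :=
  continuous_iff_continuousAt.2 fun p =>
    if hp : p.1 = 0 then continuousAt_exF_of_fst_eq_zero hp
    else continuousAt_exF_of_fst_ne_zero hp

lemma exFext_of_ne_zero {x₁ : ℝ} (h : x₁ ≠ 0) :
    exFext x₁ = fun z => (x₁ : ℂ) * Complex.sin (z / x₁) := by
  funext z
  simp [exFext, h]

lemma exFext_zero : exFext 0 = 0 := by
  funext z
  simp [exFext]

lemma differentiable_exFext (x₁ : ℝ) : Differentiable ℂ (exFext x₁) := by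
  by_cases h : x₁ = 0
  · subst h
    rw [exFext_zero]
    exact differentiable_const 0
  · rw [exFext_of_ne_zero h]
    fun_prop

lemma exFext_ofReal (x₁ t : ℝ) : exFext x₁ t = (exF (x₁, t) : ℂ) := by
  unfold exFext exF
  split_ifs <;> push_cast <;> rfl

lemma norm_exFext_of_pos {x₁ : ℝ} (h : 0 < x₁) (z : ℂ) :
    ‖exFext x₁ z‖ = x₁ * ‖Complex.sin (z / x₁)‖ := by
  rw [exFext_of_ne_zero h.ne', norm_mul, Complex.norm_real, Real.norm_of_nonneg h.le]

lemma inv_sq_mul_sinh_le_norm_exFext (x₂ : ℝ) {ν : ℕ} (hν : 0 < ν) :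
    ((ν : ℝ) ^ 2)⁻¹ * Real.sinh ν ≤
      ‖exFext (1 / (ν : ℝ) ^ 2) ((x₂ : ℂ) + Complex.I / (ν : ℝ))‖ := by
  have him : (((x₂ : ℂ) + Complex.I / (ν : ℝ)) / ((1 / (ν : ℝ) ^ 2 : ℝ) : ℂ)).im = ν := by
    rw [Complex.div_ofReal_im]
    simp only [ofReal_natCast, add_im, ofReal_im, div_natCast_im, I_im, one_div, zero_add,
      div_inv_eq_mul]
    field_simp
  rw [norm_exFext_of_pos (by positivity), ← one_div]
  gcongr
  have hsinh := Complex.sinh_im_le_norm_sin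
    (((x₂ : ℂ) + Complex.I / (ν : ℝ)) / ((1 / (ν : ℝ) ^ 2 : ℝ) : ℂ))
  rwa [him] at hsinh

/-- Example 2.3: `f` is continuous, each slice extends to an
entire function, but the extension is not tempered near any point `(0, x₂)`. -/
theorem stmt7 :
    -- (i) f is continuous on ℝ²
    Continuous exF ∧
    -- (ii) each slice extension is entire and agrees with f on ℝ
    (∀ x₁ : ℝ, Differentiable ℂ (exFext x₁) ∧
      ∀ t : ℝ, exFext x₁ (↑t) = (exF (x₁, t) : ℂ)) ∧
    -- (iii) the extension is not tempered near any (0, x₂)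
    (∀ x₂ : ℝ, ∀ C : ℝ, 0 < C → ∀ k : ℕ, ∃ ν : ℕ, 0 < ν ∧
      C * (ν : ℝ) ^ k <
        ‖exFext (1 / (ν : ℝ) ^ 2) ((x₂ : ℂ) + Complex.I / (ν : ℝ))‖) ∧
    -- indeed |F(1/ν², x₂ + i/ν)| ≥ ν⁻² sinh ν
    (∀ x₂ : ℝ, ∀ ν : ℕ, 0 < ν →
      ((ν : ℝ) ^ 2)⁻¹ * Real.sinh (ν : ℝ) ≤
        ‖exFext (1 / (ν : ℝ) ^ 2) ((x₂ : ℂ) + Complex.I / (ν : ℝ))‖) := by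
  refine ⟨continuous_exF, fun x₁ => ⟨differentiable_exFext x₁, exFext_ofReal x₁⟩,
    fun x₂ C _ k => ?_, fun x₂ _ hν => inv_sq_mul_sinh_le_norm_exFext x₂ hν⟩
  obtain ⟨ν, hν, hlt⟩ := exists_mul_pow_lt_inv_sq_mul_sinh C k
  exact ⟨ν, hν, hlt.trans_le (inv_sq_mul_sinh_le_norm_exFext x₂ hν)⟩
end

section
/- Let I = (−1,1), let Δ = {z ∈ ℂ : |z| < 1} be the open unit disc, and let f : I × ℂ → ℂ be such that: for every x₁ ∈ I the function g_{x₁} := f(x₁, ·) is holomorphic on Δ and continuous on I (as a function of a real variable agreeing with the restriction), and the restriction of f to I × I is continuous. For l > 0 set K_l = {x₁ ∈ I : sup_{z₂ ∈ Δ} |f(x₁, z₂)| ≤ l}. Then K_l is closed in I, and the function (x₁, z₂) ↦ f(x₁, z₂) is (jointly) continuous on K_l × Δ. -/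
/-!
For `x` in the closure of `K_l` (within `I`), the Taylor coefficients at `0` of `f y` converge to
those of `f x` as `y → x` in `K_l`. This goes by induction on `k`: the `k`-th coefficient of `g`
is the limit as `t → 0⁺` of `(g t - ∑_{j<k} c_j t^j) / t^k`, uniformly over functions bounded
on the disc (Cauchy estimates), while for each fixed real `t` these quotients converge by
continuity on `I × I` and the induction hypothesis. The Cauchy estimates also make the Taylor
series converge uniformly in `y` and in `z` near `z₀`, so `f` is jointly continuous at `(x, z₀)`
along `K_l × Δ`, and the bound `‖f x z‖ ≤ l` passes to the limit.
-/

open Complex Set Metric Filter Topology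

noncomputable def taylorCoeff (g : ℂ → ℂ) (k : ℕ) : ℂ := (k.factorial : ℂ)⁻¹ * iteratedDeriv k g 0

noncomputable def taylorPartialSum (g : ℂ → ℂ) (N : ℕ) (z : ℂ) : ℂ :=
  ∑ j ∈ Finset.range N, taylorCoeff g j * z ^ j

noncomputable def taylorQuotient (g : ℂ → ℂ) (k : ℕ) (z : ℂ) : ℂ :=
  (g z - taylorPartialSum g k z) / z ^ k

theorem tendstoUniformlyOnFilter_of_dist_le {ι β α : Type*} [PseudoMetricSpace α]
    {F : ι → β → α} {f : β → α} {p : Filter ι} {p' : Filter β} {b : ι → ℝ}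
    (hb : Tendsto b p (𝓝 0)) (h : ∀ᶠ n : ι × β in p ×ˢ p', dist (f n.2) (F n.1 n.2) ≤ b n.1) :
    TendstoUniformlyOnFilter F f p p' :=
  Metric.tendstoUniformlyOnFilter_iff.mpr fun ε hε => by
    filter_upwards [h, (hb.eventually (gt_mem_nhds hε)).prod_inl p'] with n h1 h2
    exact h1.trans_lt h2

section Taylor

variable {g : ℂ → ℂ} {R ρ C : ℝ}

theorem hasSum_taylorCoeff (hg : DifferentiableOn ℂ g (ball 0 R)) {z : ℂ} (hz : z ∈ ball 0 R) :
    HasSum (fun n => taylorCoeff g n * z ^ n) (g z) := by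
  simpa only [taylorCoeff, sub_zero, smul_eq_mul, mul_assoc, mul_comm (z ^ _)]
    using Complex.hasSum_taylorSeries_on_ball hg hz

theorem norm_taylorCoeff_le (hg : DifferentiableOn ℂ g (ball 0 R)) (hρ : 0 < ρ) (hρR : ρ < R)
    (hC : ∀ w ∈ sphere 0 ρ, ‖g w‖ ≤ C) (k : ℕ) : ‖taylorCoeff g k‖ ≤ C / ρ ^ k := by
  have hcauchy := Complex.norm_iteratedDeriv_le_of_forall_mem_sphere_norm_le k hρ
    (hg.diffContOnCl_ball (closedBall_subset_ball hρR)) hC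
  rw [taylorCoeff, norm_mul, norm_inv, norm_natCast, inv_mul_le_iff₀ (by positivity)]
  simpa only [mul_div_assoc] using hcauchy

theorem norm_sub_taylorPartialSum_le (hg : DifferentiableOn ℂ g (ball 0 R)) (hρ : 0 < ρ)
    (hρR : ρ < R) (hC : ∀ w ∈ sphere 0 ρ, ‖g w‖ ≤ C) {r : ℝ} (hr : r < ρ) {z : ℂ}
    (hz : ‖z‖ ≤ r) (N : ℕ) :
    ‖g z - taylorPartialSum g N z‖ ≤ C * (r / ρ) ^ N / (1 - r / ρ) := by
  have hr0 : 0 ≤ r := (norm_nonneg z).trans hz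
  have hq0 : 0 ≤ r / ρ := div_nonneg hr0 hρ.le
  have hq1 : r / ρ < 1 := (div_lt_one hρ).mpr hr
  have htail := (hasSum_nat_add_iff' N).mpr
    (hasSum_taylorCoeff hg (mem_ball_zero_iff.mpr (hz.trans_lt (hr.trans hρR))))
  have hgeom := (hasSum_geometric_of_lt_one hq0 hq1).mul_left (C * (r / ρ) ^ N)
  refine (htail.norm_le_of_bounded hgeom fun n => ?_).trans_eq (by ring)
  rw [norm_mul, norm_pow]
  calc ‖taylorCoeff g (n + N)‖ * ‖z‖ ^ (n + N) ≤ C / ρ ^ (n + N) * r ^ (n + N) :=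
        mul_le_mul (norm_taylorCoeff_le hg hρ hρR hC _) (pow_le_pow_left₀ (norm_nonneg z) hz _)
          (by positivity) ((norm_nonneg _).trans (norm_taylorCoeff_le hg hρ hρR hC _))
    _ = C * (r / ρ) ^ N * (r / ρ) ^ n := by rw [mul_assoc, ← pow_add, add_comm N n, div_pow]; ring

theorem norm_taylorQuotient_sub_taylorCoeff_le (hg : DifferentiableOn ℂ g (ball 0 R))
    (hρ : 0 < ρ) (hρR : ρ < R) (hC : ∀ w ∈ sphere 0 ρ, ‖g w‖ ≤ C) {t : ℝ} (ht : 0 < t)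
    (htρ : t < ρ) (k : ℕ) :
    ‖taylorQuotient g k t - taylorCoeff g k‖ ≤
      C / ρ ^ (k + 1) * t / (1 - t / ρ) := by
  have ht' : (t : ℂ) ≠ 0 := ofReal_ne_zero.mpr ht.ne'
  have hsplit : taylorQuotient g k t - taylorCoeff g k =
      (g t - taylorPartialSum g (k + 1) t) / (t : ℂ) ^ k := by
    rw [taylorQuotient, taylorPartialSum, taylorPartialSum, Finset.sum_range_succ]
    field_simp
    ring
  have htail := norm_sub_taylorPartialSum_le hg hρ hρR hC htρ
    (by rw [norm_real, Real.norm_of_nonneg ht.le]) (k + 1)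
  rw [hsplit, norm_div, norm_pow, norm_real, Real.norm_of_nonneg ht.le,
    div_le_iff₀ (by positivity)]
  refine htail.trans_eq ?_
  rw [div_pow, pow_succ, pow_succ]
  field_simp

end Taylor

section Family

variable {ι : Type*} {L : Filter ι} {g : ι → ℂ → ℂ} {g₀ : ℂ → ℂ} {R B : ℝ}

theorem tendsto_taylorPartialSum {N : ℕ}
    (hcoeff : ∀ j < N, Tendsto (fun i => taylorCoeff (g i) j) L (𝓝 (taylorCoeff g₀ j)))
    (z₀ : ℂ) :
    Tendsto (fun p : ι × ℂ => taylorPartialSum (g p.1) N p.2) (L ×ˢ 𝓝 z₀)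
      (𝓝 (taylorPartialSum g₀ N z₀)) :=
  tendsto_finsetSum _ fun j hj =>
    ((hcoeff j (Finset.mem_range.mp hj)).comp tendsto_fst).mul (tendsto_snd.pow j)

theorem tendsto_taylorCoeff_of_tendsto_real (hR : 0 < R)
    (hg : ∀ᶠ i in L, DifferentiableOn ℂ (g i) (ball 0 R) ∧ ∀ w ∈ ball 0 R, ‖g i w‖ ≤ B)
    (hg₀ : DifferentiableOn ℂ g₀ (ball 0 R))
    (hlim : ∀ t : ℝ, 0 < t → t < R → Tendsto (fun i => g i t) L (𝓝 (g₀ t))) (k : ℕ) :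
    Tendsto (fun i => taylorCoeff (g i) k) L (𝓝 (taylorCoeff g₀ k)) := by
  obtain ⟨ρ, hρ, hρR⟩ := exists_between hR
  have hsphere : sphere (0 : ℂ) ρ ⊆ ball 0 R := sphere_subset_ball hρR
  obtain ⟨M, hM⟩ := (isCompact_sphere (0 : ℂ) ρ).exists_bound_of_continuousOn
    (hg₀.continuousOn.mono hsphere)
  have hsmall : ∀ᶠ t in 𝓝[>] (0 : ℝ), 0 < t ∧ t < ρ := Ioo_mem_nhdsGT hρ
  induction k using Nat.strong_induction_on with
  | _ k ih =>
  have hbound : ∀ C : ℝ, Tendsto (fun t : ℝ => C / ρ ^ (k + 1) * t / (1 - t / ρ))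
      (𝓝[>] 0) (𝓝 0) := fun C => by
    have hcont : ContinuousAt (fun t : ℝ => C / ρ ^ (k + 1) * t / (1 - t / ρ)) 0 := by
      fun_prop (disch := simp)
    simpa using hcont.tendsto.mono_left nhdsWithin_le_nhds
  have huniform : TendstoUniformlyOnFilter (fun (t : ℝ) i => taylorQuotient (g i) k t)
      (fun i => taylorCoeff (g i) k) (𝓝[>] 0) L := by
    refine tendstoUniformlyOnFilter_of_dist_le (hbound B) ?_
    filter_upwards [hsmall.prod_inl L, hg.prod_inr _] with ⟨t, i⟩ ⟨ht, htρ⟩ ⟨hgi, hB⟩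
    rw [dist_comm, dist_eq_norm]
    exact norm_taylorQuotient_sub_taylorCoeff_le hgi hρ hρR
      (fun w hw => hB w (hsphere hw)) ht htρ k
  have hpointwise : ∀ᶠ t : ℝ in 𝓝[>] 0,
      Tendsto (fun i => taylorQuotient (g i) k t) L (𝓝 (taylorQuotient g₀ k t)) := by
    filter_upwards [hsmall] with t ⟨ht, htρ⟩
    have hsum : Tendsto (fun i => taylorPartialSum (g i) k t) L (𝓝 (taylorPartialSum g₀ k t)) :=
      tendsto_finsetSum _ fun j hj => (ih j (Finset.mem_range.mp hj)).mul_const _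
    exact ((hlim t ht (htρ.trans hρR)).sub hsum).div_const _
  have hlimit : Tendsto (fun t : ℝ => taylorQuotient g₀ k t) (𝓝[>] 0) (𝓝 (taylorCoeff g₀ k)) := by
    rw [tendsto_iff_norm_sub_tendsto_zero]
    refine squeeze_zero_norm' ?_ (hbound M)
    filter_upwards [hsmall] with t ⟨ht, htρ⟩
    rw [norm_norm]
    exact norm_taylorQuotient_sub_taylorCoeff_le hg₀ hρ hρR hM ht htρ k
  exact huniform.tendsto_of_eventually_tendsto hpointwise hlimit

theorem tendsto_uncurry_of_tendsto_taylorCoeff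
    (hg : ∀ᶠ i in L, DifferentiableOn ℂ (g i) (ball 0 R) ∧ ∀ w ∈ ball 0 R, ‖g i w‖ ≤ B)
    (hg₀ : DifferentiableOn ℂ g₀ (ball 0 R))
    (hcoeff : ∀ k, Tendsto (fun i => taylorCoeff (g i) k) L (𝓝 (taylorCoeff g₀ k)))
    {z₀ : ℂ} (hz₀ : z₀ ∈ ball 0 R) :
    Tendsto (fun p : ι × ℂ => g p.1 p.2) (L ×ˢ 𝓝 z₀) (𝓝 (g₀ z₀)) := by
  obtain ⟨r, hz₀r, hrR⟩ := exists_between (mem_ball_zero_iff.mp hz₀)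
  obtain ⟨ρ, hrρ, hρR⟩ := exists_between hrR
  have hr : 0 ≤ r := (norm_nonneg z₀).trans hz₀r.le
  have hρ : 0 < ρ := hr.trans_lt hrρ
  have hq : Tendsto (fun N : ℕ => B * (r / ρ) ^ N / (1 - r / ρ)) atTop (𝓝 0) := by
    simpa using ((tendsto_pow_atTop_nhds_zero_of_lt_one (div_nonneg hr hρ.le)
      ((div_lt_one hρ).mpr hrρ)).const_mul B).div_const (1 - r / ρ)
  have hnear : ∀ᶠ z in 𝓝 z₀, ‖z‖ ≤ r := by
    filter_upwards [closedBall_mem_nhds_of_mem (mem_ball_zero_iff.mpr hz₀r)] with z hz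
    exact mem_closedBall_zero_iff.mp hz
  have huniform : TendstoUniformlyOnFilter (fun N p => taylorPartialSum (g p.1) N p.2)
      (fun p => g p.1 p.2) atTop (L ×ˢ 𝓝 z₀) := by
    refine tendstoUniformlyOnFilter_of_dist_le hq ?_
    filter_upwards [(hg.prod_mk hnear).prod_inr atTop] with ⟨N, i, z⟩ ⟨⟨hgi, hB⟩, hz⟩
    rw [dist_eq_norm]
    exact norm_sub_taylorPartialSum_le hgi hρ hρR
      (fun w hw => hB w (sphere_subset_ball hρR hw)) hrρ hz N
  exact huniform.tendsto_of_eventually_tendsto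
    (Eventually.of_forall fun N => tendsto_taylorPartialSum (fun j _ => hcoeff j) z₀)
    (hasSum_taylorCoeff hg₀ hz₀).tendsto_sum_nat

theorem tendsto_uncurry_of_tendsto_real (hR : 0 < R)
    (hg : ∀ᶠ i in L, DifferentiableOn ℂ (g i) (ball 0 R) ∧ ∀ w ∈ ball 0 R, ‖g i w‖ ≤ B)
    (hg₀ : DifferentiableOn ℂ g₀ (ball 0 R))
    (hlim : ∀ t : ℝ, 0 < t → t < R → Tendsto (fun i => g i t) L (𝓝 (g₀ t)))
    {z₀ : ℂ} (hz₀ : z₀ ∈ ball 0 R) :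
    Tendsto (fun p : ι × ℂ => g p.1 p.2) (L ×ˢ 𝓝 z₀) (𝓝 (g₀ z₀)) :=
  tendsto_uncurry_of_tendsto_taylorCoeff hg hg₀
    (tendsto_taylorCoeff_of_tendsto_real hR hg hg₀ hlim) hz₀

end Family

theorem stmt8_general (f : ℝ → ℂ → ℂ)
    (hhol : ∀ x₁ ∈ Ioo (-1 : ℝ) 1, DifferentiableOn ℂ (f x₁) (ball (0 : ℂ) 1))
    (hcont : ContinuousOn (fun p : ℝ × ℝ => f p.1 (↑p.2))
      (Ioo (-1 : ℝ) 1 ×ˢ Ioo (-1 : ℝ) 1))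
    (l : ℝ) :
    (closure {x₁ ∈ Ioo (-1 : ℝ) 1 | ∀ z₂ ∈ ball (0 : ℂ) 1, ‖f x₁ z₂‖ ≤ l} ∩
        Ioo (-1 : ℝ) 1 ⊆
      {x₁ ∈ Ioo (-1 : ℝ) 1 | ∀ z₂ ∈ ball (0 : ℂ) 1, ‖f x₁ z₂‖ ≤ l}) ∧
    ContinuousOn (fun p : ℝ × ℂ => f p.1 p.2)
      ({x₁ ∈ Ioo (-1 : ℝ) 1 | ∀ z₂ ∈ ball (0 : ℂ) 1, ‖f x₁ z₂‖ ≤ l} ×ˢ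
        ball (0 : ℂ) 1) := by
  set K := {x₁ ∈ Ioo (-1 : ℝ) 1 | ∀ z₂ ∈ ball (0 : ℂ) 1, ‖f x₁ z₂‖ ≤ l}
  have key : ∀ x ∈ Ioo (-1 : ℝ) 1, ∀ z₀ ∈ ball (0 : ℂ) 1,
      Tendsto (fun p : ℝ × ℂ => f p.1 p.2) (𝓝[K] x ×ˢ 𝓝 z₀) (𝓝 (f x z₀)) := by
    intro x hx z₀ hz₀
    refine tendsto_uncurry_of_tendsto_real (B := l) one_pos ?_ (hhol x hx)
      (fun t ht0 ht1 => ?_) hz₀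
    · filter_upwards [self_mem_nhdsWithin] with y hy using ⟨hhol y hy.1, hy.2⟩
    · have ht : t ∈ Ioo (-1 : ℝ) 1 := ⟨by linarith, ht1⟩
      exact (hcont (x, t) ⟨hx, ht⟩).comp (f := fun y : ℝ => (y, t)) (by fun_prop)
        fun y hy => ⟨hy.1, ht⟩
  constructor
  · rintro x hx
    refine ⟨hx.2, fun z hz => ?_⟩
    have : (𝓝[K] x).NeBot := mem_closure_iff_nhdsWithin_neBot.mp hx.1
    have hlim : Tendsto (fun y => f y z) (𝓝[K] x) (𝓝 (f x z)) :=
      (key x hx.2 z hz).comp (tendsto_id.prodMk tendsto_const_nhds)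
    exact le_of_tendsto hlim.norm (eventually_nhdsWithin_of_forall fun y hy => hy.2 z hz)
  · rintro ⟨x, z⟩ ⟨hx, hz⟩
    refine (key x hx.1 z hz).mono_left ?_
    rw [nhdsWithin_prod_eq]
    exact prod_mono le_rfl nhdsWithin_le_nhds

/-- the sets `K_l` are closed in `I` and `f` is jointly
continuous on `K_l × Δ` (displayed claim (2.1) in step (a)). -/
theorem stmt8 (f : ℝ → ℂ → ℂ)
    (hhol : ∀ x₁ ∈ Ioo (-1 : ℝ) 1, DifferentiableOn ℂ (f x₁) (ball (0 : ℂ) 1))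
    (hcont : ContinuousOn (fun p : ℝ × ℝ => f p.1 (↑p.2))
      (Ioo (-1 : ℝ) 1 ×ˢ Ioo (-1 : ℝ) 1))
    (l : ℝ) (hl : 0 < l) :
    (closure {x₁ ∈ Ioo (-1 : ℝ) 1 | ∀ z₂ ∈ ball (0 : ℂ) 1, ‖f x₁ z₂‖ ≤ l} ∩
        Ioo (-1 : ℝ) 1 ⊆
      {x₁ ∈ Ioo (-1 : ℝ) 1 | ∀ z₂ ∈ ball (0 : ℂ) 1, ‖f x₁ z₂‖ ≤ l}) ∧
    ContinuousOn (fun p : ℝ × ℂ => f p.1 p.2)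
      ({x₁ ∈ Ioo (-1 : ℝ) 1 | ∀ z₂ ∈ ball (0 : ℂ) 1, ‖f x₁ z₂‖ ≤ l} ×ˢ
        ball (0 : ℂ) 1) :=
  stmt8_general f hhol hcont l
end
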